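/- Let N ≥ 2, P = N+1, L = NP, let π_0,…,π_{M-1} be the rows of an M×N circular Florentine rectangle over Z_N, and set g_{i,k} = π_i^{−1}(k). Fix s_0 with 0 ≤ s_0 < P, define the frequency-domain sequences Û^i by û^i_{Pr+s} = 0 if s = s_0; û^i_{Pr+s} = √(P/N)·ω_N^{r·g_{i,s}}·ω_{NP}^{s·g_{i,s}} if s < s_0; û^i_{Pr+s} = √(P/N)·ω_N^{r·g_{i,s−1}}·ω_{NP}^{s·g_{i,s−1}} if s > s_0, and let U^i be the inverse unitary DFT of Û^i. Then for all 0 ≤ i ≠ j < M and all 0 ≤ τ < L, the periodic cross-correlation satisfies |θ_{U^i, U^j}(τ)| = P. -/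

import Mathlib

/-- Periodic cross-correlation of two length-`L` complex sequences. -/
noncomputable def pcc (L : ℕ) (c d : ℕ → ℂ) (τ : ℕ) : ℂ :=
  ∑ t ∈ Finset.range L, c t * (starRingEnd ℂ) (d ((t + τ) % L))

/-- Inverse unitary DFT of a length-`L` complex sequence:
`u_t = (1/√L) Σ_{n=0}^{L-1} û_n · e^{2πi·n·t/L}`. -/
noncomputable def iudft (L : ℕ) (chat : ℕ → ℂ) (t : ℕ) : ℂ :=
  ((Real.sqrt L : ℝ) : ℂ)⁻¹ * ∑ n ∈ Finset.range L,
    chat n * Complex.exp (2 * (Real.pi : ℂ) * Complex.I * (n : ℂ) * (t : ℂ) / (L : ℂ))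

/-- An `M × N` circular Florentine rectangle over `Z_N`. -/
def IsCFR (N M : ℕ) (σ : Fin M → Equiv.Perm (ZMod N)) : Prop :=
  ∀ m : ZMod N, m ≠ 0 → ∀ i j : Fin M, ∀ x y : ZMod N,
    σ i x = σ j y → σ i (x + m) = σ j (y + m) → i = j ∧ x = y

/-- The frequency-domain sequence of Construction 2, with `P = N+1`: writing
`n = P·r + s` (`r = n/P`, `s = n%P`), `û_n = 0` if `s = s₀`;
`û_n = √(P/N)·ω_N^{r·g(s)}·ω_{NP}^{s·g(s)}` if `s < s₀`; and
`û_n = √(P/N)·ω_N^{r·g(s−1)}·ω_{NP}^{s·g(s−1)}` if `s > s₀`. -/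
noncomputable def uhatC2 (N : ℕ) (g : ℕ → ℕ) (s0 : ℕ) (n : ℕ) : ℂ :=
  if n % (N + 1) = s0 then 0
  else if n % (N + 1) < s0 then
    (Real.sqrt (((N : ℝ) + 1) / (N : ℝ)) : ℂ) *
      Complex.exp (2 * (Real.pi : ℂ) * Complex.I *
        (((n / (N + 1)) * g (n % (N + 1)) : ℕ) : ℂ) / (N : ℂ)) *
      Complex.exp (2 * (Real.pi : ℂ) * Complex.I *
        (((n % (N + 1)) * g (n % (N + 1)) : ℕ) : ℂ) / ((N * (N + 1) : ℕ) : ℂ))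
  else
    (Real.sqrt (((N : ℝ) + 1) / (N : ℝ)) : ℂ) *
      Complex.exp (2 * (Real.pi : ℂ) * Complex.I *
        (((n / (N + 1)) * g (n % (N + 1) - 1) : ℕ) : ℂ) / (N : ℂ)) *
      Complex.exp (2 * (Real.pi : ℂ) * Complex.I *
        (((n % (N + 1)) * g (n % (N + 1) - 1) : ℕ) : ℂ) / ((N * (N + 1) : ℕ) : ℂ))


section Aux
open Finset Complex

noncomputable def ee (L : ℕ) (a : ℤ) : ℂ := Complex.exp (2 * Real.pi * Complex.I * a / L)

lemma ee_add (L : ℕ) (a b : ℤ) : ee L (a + b) = ee L a * ee L b := by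
  rw [ee, ee, ee, ← Complex.exp_add]
  congr 1
  push_cast
  ring

lemma conj_ee (L : ℕ) (a : ℤ) : (starRingEnd ℂ) (ee L a) = ee L (-a) := by
  rw [ee, ee, ← Complex.exp_conj]
  congr 1
  simp [map_div₀, map_ofNat]

lemma norm_ee (L : ℕ) (a : ℤ) : ‖ee L a‖ = 1 := by
  rw [ee]
  rw [Complex.norm_exp]
  have : (2 * (Real.pi:ℂ) * Complex.I * a / L).re = 0 := by
    simp [Complex.div_re]
  rw [this, Real.exp_zero]

lemma ee_mul_self (L : ℕ) (hL : 0 < L) (k : ℤ) : ee L (L * k) = 1 := by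
  rw [ee]
  have : 2 * (Real.pi:ℂ) * Complex.I * (↑(L * k)) / L = k * (2 * Real.pi * Complex.I) := by
    have hL' : (L : ℂ) ≠ 0 := Nat.cast_ne_zero.mpr hL.ne'
    field_simp
    simp
  rw [this, Complex.exp_int_mul_two_pi_mul_I]

lemma ee_pow (L : ℕ) (a : ℤ) (t : ℕ) : ee L a ^ t = ee L (a * t) := by
  rw [ee, ee, ← Complex.exp_nat_mul]
  congr 1
  push_cast
  ring

lemma orth (L : ℕ) (hL : 0 < L) (a : ℤ) :
    ∑ t ∈ Finset.range L, ee L (a * t) = if (L:ℤ) ∣ a then (L:ℂ) else 0 := by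
  split_ifs with h
  · obtain ⟨k, rfl⟩ := h
    have : ∀ t ∈ Finset.range L, ee L ((L:ℤ) * k * t) = 1 := by
      intro t _
      have : (L:ℤ) * k * t = L * (k * t) := by ring
      rw [this, ee_mul_self L hL]
    rw [Finset.sum_congr rfl this]
    simp
  · have hz : ee L a ≠ 1 := by
      intro hone
      apply h
      rw [ee, Complex.exp_eq_one_iff] at hone
      obtain ⟨k, hk⟩ := hone
      have hL' : (L : ℂ) ≠ 0 := Nat.cast_ne_zero.mpr hL.ne'
      have hL' : (L : ℂ) ≠ 0 := Nat.cast_ne_zero.mpr hL.ne'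
      have h2 : (2 : ℂ) * Real.pi * Complex.I ≠ 0 := by
        simp [Real.pi_ne_zero, Complex.I_ne_zero, Complex.ofReal_ne_zero]
      have : (a : ℂ) = (L : ℂ) * k := by
        field_simp at hk
        have h3 : (2:ℂ) * Real.pi * Complex.I * a = 2 * Real.pi * Complex.I * (L * k) := by
          rw [hk]
        exact mul_left_cancel₀ h2 h3
      exact ⟨k, by exact_mod_cast this⟩
    have := geom_sum_eq hz L
    calc ∑ t ∈ Finset.range L, ee L (a * t) = ∑ t ∈ Finset.range L, ee L a ^ t := by
          refine Finset.sum_congr rfl fun t _ => ?_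
          rw [ee_pow]
        _ = (ee L a ^ L - 1) / (ee L a - 1) := this
        _ = 0 := by
          rw [ee_pow, show a * (L:ℤ) = L * a by ring, ee_mul_self L hL]
          simp

lemma ee_eq_exp (L m t : ℕ) :
    Complex.exp (2 * (Real.pi:ℂ) * Complex.I * (m:ℂ) * (t:ℂ) / L) = ee L (m * t) := by
  rw [ee]; congr 1; push_cast; ring

lemma ee_nat_mod (L : ℕ) (hL : 0 < L) (m x : ℕ) :
    ee L ((m : ℤ) * ((x % L : ℕ) : ℤ)) = ee L (m * x) := by
  conv_rhs => rw [← Nat.mod_add_div x L]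
  have h : ((m:ℤ)) * (((x % L + L * (x / L) : ℕ)) : ℤ)
      = (m:ℤ) * ((x % L : ℕ) : ℤ) + (L:ℤ) * (m * (x/L)) := by push_cast; ring
  rw [h, ee_add, ee_mul_self L hL, mul_one]

lemma pcc_iudft (L : ℕ) (hL : 0 < L) (c d : ℕ → ℂ) (τ : ℕ) :
    pcc L (iudft L c) (iudft L d) τ =
      ∑ n ∈ Finset.range L, c n * (starRingEnd ℂ) (d n) * ee L (-((n : ℤ) * τ)) := by
  have hLC : (L : ℂ) ≠ 0 := Nat.cast_ne_zero.mpr hL.ne'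
  have hs2 : ((Real.sqrt L : ℝ) : ℂ) * ((Real.sqrt L : ℝ) : ℂ) = (L:ℂ) := by
    rw [← Complex.ofReal_mul, Real.mul_self_sqrt (Nat.cast_nonneg L)]
    norm_cast
  have hsqrt : ((Real.sqrt L : ℝ) : ℂ)⁻¹ * ((Real.sqrt L : ℝ) : ℂ)⁻¹ = (L:ℂ)⁻¹ := by
    rw [← mul_inv, hs2]
  calc pcc L (iudft L c) (iudft L d) τ
      = ∑ t ∈ Finset.range L, (((Real.sqrt L : ℝ) : ℂ)⁻¹ * ∑ n ∈ Finset.range L, c n * ee L (n * t)) *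
          (starRingEnd ℂ) (((Real.sqrt L : ℝ) : ℂ)⁻¹ * ∑ m ∈ Finset.range L, d m * ee L (m * (t + τ))) := by
        unfold pcc iudft
        refine Finset.sum_congr rfl fun t _ => ?_
        congr 2
        · exact Finset.sum_congr rfl fun n _ => by rw [ee_eq_exp]
        · congr 1
          refine Finset.sum_congr rfl fun m _ => ?_
          rw [ee_eq_exp, ee_nat_mod L hL m (t + τ)]
          push_cast
          ring_nf
    _ = ∑ t ∈ Finset.range L, (L:ℂ)⁻¹ * ∑ n ∈ Finset.range L, ∑ m ∈ Finset.range L,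
          c n * (starRingEnd ℂ) (d m) * (ee L ((n:ℤ) * t) * ee L (-((m:ℤ) * (t + τ)))) := by
        refine Finset.sum_congr rfl fun t _ => ?_
        rw [map_mul, map_sum, map_inv₀, Complex.conj_ofReal]
        simp only [map_mul, conj_ee]
        rw [mul_mul_mul_comm, hsqrt, Finset.sum_mul_sum]
        congr 1
        refine Finset.sum_congr rfl (fun n _ => Finset.sum_congr rfl fun m _ => ?_)
        ring
    _ = (L:ℂ)⁻¹ * ∑ n ∈ Finset.range L, ∑ m ∈ Finset.range L,
          c n * (starRingEnd ℂ) (d m) * ee L (-((m:ℤ)*τ)) *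
            (if (L:ℤ) ∣ ((n:ℤ) - m) then (L:ℂ) else 0) := by
        rw [← Finset.mul_sum, Finset.sum_comm]
        congr 1
        refine Finset.sum_congr rfl fun n _ => ?_
        rw [Finset.sum_comm]
        refine Finset.sum_congr rfl fun m _ => ?_
        have key : ∀ t : ℕ, ee L ((n:ℤ)*t) * ee L (-((m:ℤ)*(t+τ)))
            = ee L (-((m:ℤ)*τ)) * ee L (((n:ℤ)-m)*t) := by
          intro t
          rw [← ee_add, ← ee_add]
          congr 1
          ring
        calc ∑ t ∈ Finset.range L, c n * (starRingEnd ℂ) (d m) * (ee L ((n:ℤ)*t) * ee L (-((m:ℤ)*(t+τ))))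
            = ∑ t ∈ Finset.range L, c n * (starRingEnd ℂ) (d m) * ee L (-((m:ℤ)*τ)) * ee L (((n:ℤ)-m)*t) := by
              refine Finset.sum_congr rfl fun t _ => ?_
              rw [key t]
              ring
          _ = c n * (starRingEnd ℂ) (d m) * ee L (-((m:ℤ)*τ)) * ∑ t ∈ Finset.range L, ee L (((n:ℤ)-m)*t) := by
              rw [Finset.mul_sum]
          _ = _ := by rw [orth L hL]
    _ = (L:ℂ)⁻¹ * ∑ n ∈ Finset.range L, c n * (starRingEnd ℂ) (d n) * ee L (-((n:ℤ)*τ)) * L := by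
        congr 1
        refine Finset.sum_congr rfl fun n hn => ?_
        have hn' : n < L := Finset.mem_range.mp hn
        have step : ∀ m ∈ Finset.range L,
            (c n * (starRingEnd ℂ) (d m) * ee L (-((m:ℤ)*τ)) * (if (L:ℤ) ∣ ((n:ℤ) - m) then (L:ℂ) else 0))
            = (if m = n then c n * (starRingEnd ℂ) (d m) * ee L (-((m:ℤ)*τ)) * L else 0) := by
          intro m hm
          have hm' : m < L := Finset.mem_range.mp hm
          by_cases h : m = n
          · subst h
            simp
          · rw [if_neg h, if_neg, mul_zero]
            intro hdvd
            exact h (by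
              have h2 : ((n:ℤ) - m) = 0 := Int.eq_zero_of_dvd_of_natAbs_lt_natAbs hdvd (by omega)
              omega)
        rw [Finset.sum_congr rfl step, Finset.sum_ite_eq' (Finset.range L) n]
        rw [if_pos hn]
    _ = ∑ n ∈ Finset.range L, c n * (starRingEnd ℂ) (d n) * ee L (-((n : ℤ) * τ)) := by
        rw [← Finset.sum_mul, mul_comm ((L:ℂ)⁻¹), mul_assoc, mul_inv_cancel₀ hLC, mul_one]

lemma exp_nat_ee (L x : ℕ) :
    Complex.exp (2 * (Real.pi:ℂ) * Complex.I * ((x : ℕ) : ℂ) / ((L : ℕ) : ℂ)) = ee L (x : ℤ) := by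
  rw [ee]; norm_cast

lemma ee_mul_left (N P : ℕ) (hN : 0 < N) (hP : 0 < P) (x : ℤ) :
    ee (N * P) ((P : ℤ) * x) = ee N x := by
  rw [ee, ee]
  congr 1
  have h1 : ((N * P : ℕ) : ℂ) ≠ 0 := Nat.cast_ne_zero.mpr (Nat.mul_ne_zero hN.ne' hP.ne')
  have h2 : (N : ℂ) ≠ 0 := Nat.cast_ne_zero.mpr hN.ne'
  rw [div_eq_div_iff h1 h2]
  push_cast
  ring

lemma sum_range_mul (a b : ℕ) (hb : 0 < b) (f : ℕ → ℂ) :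
    ∑ n ∈ Finset.range (a * b), f n
      = ∑ r ∈ Finset.range a, ∑ s ∈ Finset.range b, f (b * r + s) := by
  rw [← Finset.sum_product']
  refine Finset.sum_nbij' (fun n => (n / b, n % b)) (fun p => b * p.1 + p.2) ?_ ?_ ?_ ?_ ?_
  · intro n hn
    rw [Finset.mem_range] at hn
    rw [Finset.mem_product, Finset.mem_range, Finset.mem_range]
    exact ⟨Nat.div_lt_of_lt_mul (by rw [mul_comm]; exact hn), Nat.mod_lt _ hb⟩
  · intro p hp
    rw [Finset.mem_product, Finset.mem_range, Finset.mem_range] at hp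
    rw [Finset.mem_range]
    calc b * p.1 + p.2 < b * p.1 + b := by omega
      _ ≤ b * a := by nlinarith [hp.1]
      _ = a * b := mul_comm b a
  · intro n _
    exact Nat.div_add_mod n b
  · intro p hp
    rw [Finset.mem_product, Finset.mem_range, Finset.mem_range] at hp
    have h1 : (b * p.1 + p.2) / b = p.1 := by
      rw [Nat.mul_add_div hb, Nat.div_eq_of_lt hp.2, add_zero]
    have h2 : (b * p.1 + p.2) % b = p.2 := by
      rw [Nat.mul_add_mod, Nat.mod_eq_of_lt hp.2]
    simp [h1, h2]
  · intro n _
    exact congrArg f (Nat.div_add_mod n b).symm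

def auxA (gi gj : ℕ → ℕ) (s0 s : ℕ) : ℤ :=
  (gi (if s < s0 then s else s - 1) : ℤ) - (gj (if s < s0 then s else s - 1) : ℤ)

lemma uhat_core (N : ℕ) (hN : 0 < N) (u v r s τ : ℕ) :
    ((Real.sqrt (((N : ℝ) + 1) / (N : ℝ)) : ℂ) * ee N ((r * u : ℕ)) * ee (N*(N+1)) ((s * u : ℕ))) *
      ((Real.sqrt (((N : ℝ) + 1) / (N : ℝ)) : ℂ) * ee N (-((r * v : ℕ) : ℤ)) *
        ee (N*(N+1)) (-((s * v : ℕ) : ℤ))) *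
      (ee N (-((r : ℤ) * τ)) * ee (N*(N+1)) (-((s : ℤ) * τ))) =
    (((N:ℂ)+1)/N) * (ee (N*(N+1)) ((s : ℤ) * ((u : ℤ) - v - τ)) * ee N ((r : ℤ) * ((u : ℤ) - v - τ))) := by
  have hq : ((Real.sqrt (((N : ℝ) + 1) / (N : ℝ)) : ℂ)) * (Real.sqrt (((N : ℝ) + 1) / (N : ℝ)) : ℂ)
      = ((N:ℂ)+1)/N := by
    rw [← Complex.ofReal_mul, Real.mul_self_sqrt (by positivity)]
    push_cast
    ring
  have e1 : ee N ((r * u : ℕ)) * ee N (-((r * v : ℕ) : ℤ)) * ee N (-((r : ℤ) * τ))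
      = ee N ((r : ℤ) * ((u:ℤ) - v - τ)) := by
    rw [← ee_add, ← ee_add]; congr 1; push_cast; ring
  have e2 : ee (N*(N+1)) ((s * u : ℕ)) * ee (N*(N+1)) (-((s * v : ℕ) : ℤ)) * ee (N*(N+1)) (-((s : ℤ) * τ))
      = ee (N*(N+1)) ((s : ℤ) * ((u:ℤ) - v - τ)) := by
    rw [← ee_add, ← ee_add]; congr 1; push_cast; ring
  calc ((Real.sqrt (((N : ℝ) + 1) / (N : ℝ)) : ℂ) * ee N ((r * u : ℕ)) * ee (N*(N+1)) ((s * u : ℕ))) *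
      ((Real.sqrt (((N : ℝ) + 1) / (N : ℝ)) : ℂ) * ee N (-((r * v : ℕ) : ℤ)) *
        ee (N*(N+1)) (-((s * v : ℕ) : ℤ))) *
      (ee N (-((r : ℤ) * τ)) * ee (N*(N+1)) (-((s : ℤ) * τ)))
      = ((Real.sqrt (((N : ℝ) + 1) / (N : ℝ)) : ℂ) * (Real.sqrt (((N : ℝ) + 1) / (N : ℝ)) : ℂ)) *
        (ee N ((r * u : ℕ)) * ee N (-((r * v : ℕ) : ℤ)) * ee N (-((r : ℤ) * τ))) *
        (ee (N*(N+1)) ((s * u : ℕ)) * ee (N*(N+1)) (-((s * v : ℕ) : ℤ)) * ee (N*(N+1)) (-((s : ℤ) * τ))) := by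
        ring
    _ = (((N:ℂ)+1)/N) * (ee (N*(N+1)) ((s : ℤ) * ((u : ℤ) - v - τ)) * ee N ((r : ℤ) * ((u : ℤ) - v - τ))) := by
        rw [hq, e1, e2]; ring

lemma uhat_prod (N : ℕ) (hN : 0 < N) (gi gj : ℕ → ℕ) (s0 τ r s : ℕ) (hs : s < N + 1) :
    uhatC2 N gi s0 ((N+1) * r + s) * (starRingEnd ℂ) (uhatC2 N gj s0 ((N+1) * r + s)) *
      ee (N * (N+1)) (-((((N+1) * r + s : ℕ) : ℤ) * τ)) =
    if s = s0 then 0 else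
      (((N : ℂ) + 1) / N) *
        (ee (N * (N+1)) ((s : ℤ) * (auxA gi gj s0 s - τ)) *
         ee N ((r : ℤ) * (auxA gi gj s0 s - τ))) := by
  have hmod : ((N+1) * r + s) % (N+1) = s := by
    rw [Nat.mul_add_mod, Nat.mod_eq_of_lt hs]
  have hdiv : ((N+1) * r + s) / (N+1) = r := by
    rw [Nat.mul_add_div (by omega), Nat.div_eq_of_lt hs, add_zero]
  have hsplit : ee (N*(N+1)) (-((((N+1) * r + s : ℕ) : ℤ) * τ))
      = ee N (-((r : ℤ) * τ)) * ee (N*(N+1)) (-((s : ℤ) * τ)) := by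
    have harg : -((((N+1) * r + s : ℕ) : ℤ) * τ) = ((N+1 : ℕ) : ℤ) * (-((r:ℤ) * τ)) + (-((s:ℤ) * τ)) := by
      push_cast; ring
    rw [harg, ee_add, ee_mul_left N (N+1) hN (by omega)]
  unfold uhatC2
  rw [hmod, hdiv]
  by_cases h0 : s = s0
  · simp [h0]
  rw [if_neg h0, if_neg h0, if_neg h0]
  by_cases h1 : s < s0
  · have ha : auxA gi gj s0 s = (gi s : ℤ) - gj s := by simp [auxA, h1]
    rw [if_pos h1, if_pos h1, ha]
    rw [exp_nat_ee, exp_nat_ee, exp_nat_ee, exp_nat_ee]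
    rw [map_mul, map_mul, Complex.conj_ofReal, conj_ee, conj_ee]
    rw [hsplit]
    exact uhat_core N hN (gi s) (gj s) r s τ
  · have ha : auxA gi gj s0 s = (gi (s-1) : ℤ) - gj (s-1) := by simp [auxA, h1]
    rw [if_neg h1, if_neg h1, ha]
    rw [exp_nat_ee, exp_nat_ee, exp_nat_ee, exp_nat_ee]
    rw [map_mul, map_mul, Complex.conj_ofReal, conj_ee, conj_ee]
    rw [hsplit]
    exact uhat_core N hN (gi (s-1)) (gj (s-1)) r s τ

lemma cfr_inj (N M : ℕ) (σ : Fin M → Equiv.Perm (ZMod N)) (hCFR : IsCFR N M σ)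
    (i j : Fin M) (hij : i ≠ j) :
    Function.Injective (fun k : ZMod N => (σ i).symm k - (σ j).symm k) := by
  intro k1 k2 h
  by_contra hne
  simp only [] at h
  set m := (σ i).symm k2 - (σ i).symm k1 with hm
  have hm0 : m ≠ 0 := by
    intro h0
    apply hne
    have : (σ i).symm k2 = (σ i).symm k1 := by
      have := sub_eq_zero.mp ((hm ▸ h0 : (σ i).symm k2 - (σ i).symm k1 = 0))
      exact this
    exact ((σ i).symm.injective this).symm
  have hm2 : (σ j).symm k2 - (σ j).symm k1 = m := by
    rw [hm]; linear_combination h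
  have h1 : σ i ((σ i).symm k1) = σ j ((σ j).symm k1) := by simp
  have h2 : σ i ((σ i).symm k1 + m) = σ j ((σ j).symm k1 + m) := by
    have e1 : (σ i).symm k1 + m = (σ i).symm k2 := by rw [hm]; ring
    have e2 : (σ j).symm k1 + m = (σ j).symm k2 := by rw [← hm2]; ring
    rw [e1, e2]; simp
  exact hij (hCFR m hm0 i j _ _ h1 h2).1


end Aux

/-- in the setting of Construction 2 (`N ≥ 2`, `P = N+1`, `L = NP`,
rows `σ 0, …, σ (M−1)` of an `M × N` CFR over `Z_N`, `g_{i,k} = σ_i⁻¹(k)`,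
`0 ≤ s₀ < P`), for all `i ≠ j` and all `0 ≤ τ < L` the periodic cross-correlation
of the time-domain sequences satisfies `|θ_{U^i,U^j}(τ)| = P`. -/
theorem stmt12 (N M : ℕ) (hN : 2 ≤ N) (σ : Fin M → Equiv.Perm (ZMod N))
    (hCFR : IsCFR N M σ) (s0 : ℕ) (hs0 : s0 < N + 1)
    (U : Fin M → ℕ → ℂ)
    (hU : ∀ (i : Fin M) (t : ℕ), U i t =
      iudft (N * (N + 1)) (uhatC2 N (fun k => ((σ i).symm ((k : ℕ) : ZMod N)).val) s0) t)
    (i j : Fin M) (hij : i ≠ j) (τ : ℕ) (hτ : τ < N * (N + 1)) :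
    ‖pcc (N * (N + 1)) (U i) (U j) τ‖ = (N : ℝ) + 1 := by
  haveI : NeZero N := ⟨by omega⟩
  have hN0 : 0 < N := by omega
  have hP : 0 < N + 1 := by omega
  have hL : 0 < N * (N + 1) := Nat.mul_pos hN0 hP
  have hNC : (N : ℂ) ≠ 0 := Nat.cast_ne_zero.mpr hN0.ne'
  set gi : ℕ → ℕ := fun k => ((σ i).symm ((k : ℕ) : ZMod N)).val with hgi
  set gj : ℕ → ℕ := fun k => ((σ j).symm ((k : ℕ) : ZMod N)).val with hgj
  have hUi : U i = iudft (N * (N + 1)) (uhatC2 N gi s0) := funext (hU i)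
  have hUj : U j = iudft (N * (N + 1)) (uhatC2 N gj s0) := funext (hU j)
  set f : ZMod N → ZMod N := fun k => (σ i).symm k - (σ j).symm k with hf
  have hfinj : Function.Injective f := cfr_inj N M σ hCFR i j hij
  have hfsurj : Function.Surjective f := Finite.surjective_of_injective hfinj
  obtain ⟨kst, hkst⟩ := hfsurj ((τ : ℕ) : ZMod N)
  set u : ℕ := kst.val with hu
  have hult : u < N := ZMod.val_lt kst
  set sst : ℕ := if u < s0 then u else u + 1 with hsst
  have hsstP : sst < N + 1 := by rw [hsst]; split_ifs <;> omega
  have hsst0 : sst ≠ s0 := by rw [hsst]; split_ifs <;> omega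
  have hsst' : (if sst < s0 then sst else sst - 1) = u := by
    rw [hsst]; split_ifs <;> omega
  -- divisibility bridge
  have hbridge : ∀ s : ℕ, ((N : ℤ) ∣ (auxA gi gj s0 s - (τ : ℤ))) ↔
      f ((((if s < s0 then s else s - 1) : ℕ) : ZMod N)) = ((τ : ℕ) : ZMod N) := by
    intro s
    rw [← ZMod.intCast_zmod_eq_zero_iff_dvd]
    simp only [auxA]
    simp only [hf, hgi, hgj]
    push_cast
    rw [sub_eq_zero]
    simp [ZMod.natCast_val, ZMod.intCast_cast]
  -- bound on s'
  have hs'lt : ∀ s : ℕ, s < N + 1 → s ≠ s0 → (if s < s0 then s else s - 1) < N := by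
    intro s hsP hss0
    split_ifs with h <;> omega
  -- uniqueness of sst
  have huniq : ∀ s : ℕ, s < N + 1 → s ≠ s0 → s ≠ sst →
      ¬ ((N : ℤ) ∣ (auxA gi gj s0 s - (τ : ℤ))) := by
    intro s hsP hss0 hssst hdvd
    have h1 := (hbridge s).mp hdvd
    rw [← hkst] at h1
    have h2 : ((if s < s0 then s else s - 1 : ℕ) : ZMod N) = kst := hfinj h1
    have h3 : (if s < s0 then s else s - 1) = u := by
      have h4 := congrArg ZMod.val h2
      rw [ZMod.val_cast_of_lt (hs'lt s hsP hss0)] at h4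
      exact h4
    rw [hsst] at hssst
    split_ifs at h3 <;> split_ifs at hssst <;> omega
  -- the value at sst
  have hdvdsst : (N : ℤ) ∣ (auxA gi gj s0 sst - (τ : ℤ)) := by
    rw [hbridge sst, hsst', hu]
    rw [show ((kst.val : ℕ) : ZMod N) = kst by simp [ZMod.natCast_val]]
    exact hkst
  -- main computation
  rw [hUi, hUj, pcc_iudft _ hL]
  rw [sum_range_mul N (N + 1) hP]
  rw [Finset.sum_congr rfl (fun r _ => Finset.sum_congr rfl
    (fun s hs => uhat_prod N hN0 gi gj s0 τ r s (Finset.mem_range.mp hs)))]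
  rw [Finset.sum_comm]
  have hinner : ∀ s ∈ Finset.range (N + 1),
      (∑ r ∈ Finset.range N, if s = s0 then 0 else
        (((N : ℂ) + 1) / N) *
          (ee (N * (N+1)) ((s : ℤ) * (auxA gi gj s0 s - τ)) *
           ee N ((r : ℤ) * (auxA gi gj s0 s - τ))))
      = if s = s0 then 0 else
          if (N : ℤ) ∣ (auxA gi gj s0 s - (τ : ℤ)) then
            ((N : ℂ) + 1) * ee (N * (N+1)) ((s : ℤ) * (auxA gi gj s0 s - τ))
          else 0 := by
    intro s _
    by_cases h0 : s = s0
    · simp [h0]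
    simp only [if_neg h0]
    calc ∑ r ∈ Finset.range N,
          (((N : ℂ) + 1) / N) *
            (ee (N * (N+1)) ((s : ℤ) * (auxA gi gj s0 s - τ)) *
             ee N ((r : ℤ) * (auxA gi gj s0 s - τ)))
        = (((N : ℂ) + 1) / N) * ee (N * (N+1)) ((s : ℤ) * (auxA gi gj s0 s - τ)) *
            ∑ r ∈ Finset.range N, ee N ((auxA gi gj s0 s - τ) * (r : ℕ)) := by
          rw [Finset.mul_sum]
          refine Finset.sum_congr rfl fun r _ => ?_
          rw [mul_comm ((r : ℤ)) _]
          ring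
      _ = (((N : ℂ) + 1) / N) * ee (N * (N+1)) ((s : ℤ) * (auxA gi gj s0 s - τ)) *
            (if (N:ℤ) ∣ (auxA gi gj s0 s - (τ:ℤ)) then (N:ℂ) else 0) := by
          rw [orth N hN0]
      _ = _ := by
          split_ifs with h
          · field_simp
          · rw [mul_zero]
  rw [Finset.sum_congr rfl hinner]
  rw [Finset.sum_eq_single_of_mem sst (Finset.mem_range.mpr hsstP)
    (fun b hb hbne => by
      by_cases hb0 : b = s0
      · simp [hb0]
      rw [if_neg hb0, if_neg (huniq b (Finset.mem_range.mp hb) hb0 hbne)])]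
  rw [if_neg hsst0, if_pos hdvdsst]
  rw [norm_mul, norm_ee, mul_one]
  rw [show ((N : ℂ) + 1) = ((N + 1 : ℕ) : ℂ) by push_cast; ring]
  rw [Complex.norm_natCast]
  push_cast
  ring
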